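/- arXiv:0911.3765 — 2 statements merged into one kernel-verified Lean document; each statement's English description precedes it below -/
import Mathlib

section
/- For every nonnegative integer n, the derivative of P_n satisfies P_n'(x) = Σ_{k=1}^{n+1} T(n+1,k) x^{k-1}, where T(n,k) are the tangent numbers of order k. -/
open Polynomial

noncomputable def P : ℕ → Polynomial ℝ
  | 0 => Polynomial.X
  | n + 1 => (1 + Polynomial.X ^ 2) * Polynomial.derivative (P n)

noncomputable def T (n k : ℕ) : ℝ :=
  iteratedDeriv n (fun t : ℝ => Real.tan t ^ k) 0

noncomputable def Q : ℕ → ℕ → Polynomial ℝ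
  | 0, k => Polynomial.X ^ k
  | n + 1, k => (1 + Polynomial.X ^ 2) * Polynomial.derivative (Q n k)

lemma tan_iter (k : ℕ) : ∀ n, ∀ t : ℝ, Real.cos t ≠ 0 →
    iteratedDeriv n (fun t : ℝ => Real.tan t ^ k) t = (Q n k).eval (Real.tan t) := by
  intro n
  induction n with
  | zero => intro t ht; simp [Q]
  | succ n ih =>
    intro t ht
    rw [iteratedDeriv_succ]
    have hopen : IsOpen {s : ℝ | Real.cos s ≠ 0} :=
      isOpen_ne.preimage Real.continuous_cos
    have hev : iteratedDeriv n (fun t : ℝ => Real.tan t ^ k)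
        =ᶠ[nhds t] fun s => (Q n k).eval (Real.tan s) := by
      filter_upwards [hopen.mem_nhds ht] with s hs using ih s hs
    rw [hev.deriv_eq]
    have hd : HasDerivAt (fun s => (Q n k).eval (Real.tan s))
        ((derivative (Q n k)).eval (Real.tan t) * (1 / Real.cos t ^ 2)) t :=
      (Polynomial.hasDerivAt (Q n k) (Real.tan t)).comp t (Real.hasDerivAt_tan ht)
    rw [hd.deriv]
    have h1 : (1 : ℝ) / Real.cos t ^ 2 = 1 + Real.tan t ^ 2 := by
      rw [one_div, ← Real.inv_one_add_tan_sq ht, inv_inv]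
    rw [h1]
    show _ = ((1 + X ^ 2) * derivative (Q n k)).eval (Real.tan t)
    simp
    ring

lemma T_eq (n k : ℕ) : T n k = (Q n k).eval 0 := by
  have := tan_iter k n 0 (by simp)
  simpa [T, Real.tan_zero] using this

lemma Q_zero_right : ∀ n, Q (n + 1) 0 = 0 := by
  intro n
  induction n with
  | zero => simp [Q]
  | succ n ih => show (1 + X ^ 2) * derivative (Q (n + 1) 0) = 0; rw [ih]; simp

lemma Q_rec : ∀ n k, Q (n + 1) (k + 1) = ((k : ℝ) + 1) • (Q n k + Q n (k + 2)) := by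
  intro n
  induction n with
  | zero =>
    intro k
    show (1 + X ^ 2) * derivative (X ^ (k + 1) : Polynomial ℝ) = _
    simp [Q, derivative_X_pow, smul_eq_C_mul]
    ring
  | succ n ih =>
    intro k
    show (1 + X ^ 2) * derivative (Q (n + 1) (k + 1)) = _
    rw [ih k]
    have e1 : Q (n + 1) k = (1 + X ^ 2) * derivative (Q n k) := rfl
    have e2 : Q (n + 1) (k + 2) = (1 + X ^ 2) * derivative (Q n (k + 2)) := rfl
    rw [derivative_smul, derivative_add, e1, e2]
    rw [smul_add, smul_add, mul_add]
    rw [mul_smul_comm, mul_smul_comm]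

lemma P_eq_Q : ∀ n, P n = Q n 1 := by
  intro n
  induction n with
  | zero => simp [P, Q]
  | succ n ih =>
    show (1 + X ^ 2) * derivative (P n) = (1 + X ^ 2) * derivative (Q n 1)
    rw [ih]

lemma key : ∀ n k, (Q (n + 1) (k + 1)).eval 0 = ((k : ℝ) + 1) * (P n).coeff (k + 1) := by
  intro n
  induction n with
  | zero =>
    intro k
    rw [Q_rec]
    rcases k with _ | j
    · simp [Q, P]
    · simp [Q, P, coeff_X]
  | succ n ih =>
    intro k
    rw [Q_rec]
    have hP : (P (n + 1)).coeff (k + 1)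
        = (derivative (P n)).coeff (k + 1) + (X ^ 2 * derivative (P n)).coeff (k + 1) := by
      show ((1 + X ^ 2) * derivative (P n)).coeff (k + 1) = _
      rw [add_mul, one_mul, coeff_add]
    rcases k with _ | j
    · -- k = 0
      rw [hP]
      have h2 : (X ^ 2 * derivative (P n)).coeff 1 = 0 := by
        rw [mul_comm, coeff_mul_X_pow']
        simp
      have h0 : (Q (n + 1) 0).eval 0 = 0 := by rw [Q_zero_right]; simp
      simp only [eval_smul, eval_add, smul_eq_mul, h0, zero_add]
      have h1 := ih 1
      norm_num at h1 ⊢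
      rw [h1, h2, coeff_derivative]
      push_cast
      ring
    · -- k = j + 1
      rw [hP]
      have h2 : (X ^ 2 * derivative (P n)).coeff (j + 2) = (derivative (P n)).coeff j := by
        rw [mul_comm, coeff_mul_X_pow']
        simp
      simp only [eval_smul, eval_add, smul_eq_mul]
      rw [ih j, show j + 1 + 2 = (j + 2) + 1 by ring, ih (j + 2), h2,
        coeff_derivative, coeff_derivative]
      push_cast
      ring

lemma natDegree_P_le : ∀ n, (P n).natDegree ≤ n + 1 := by
  intro n
  induction n with
  | zero => simp [P]
  | succ n ih =>
    show ((1 + X ^ 2) * derivative (P n)).natDegree ≤ n + 2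
    refine le_trans (natDegree_mul_le) ?_
    have h1 : (1 + X ^ 2 : Polynomial ℝ).natDegree ≤ 2 := by
      refine le_trans (natDegree_add_le _ _) ?_
      simp
    have h2 : (derivative (P n)).natDegree ≤ n := by
      refine le_trans (natDegree_derivative_le _) ?_
      omega
    omega

theorem P_deriv_eq (n : ℕ) (x : ℝ) :
    (Polynomial.derivative (P n)).eval x
      = ∑ k ∈ Finset.Icc 1 (n + 1), T (n + 1) k * x ^ (k - 1) := by
  have hdeg : (derivative (P n)).natDegree < n + 1 := by
    have := natDegree_derivative_le (P n)
    have := natDegree_P_le n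
    omega
  rw [eval_eq_sum_range' hdeg x]
  rw [show Finset.Icc 1 (n + 1) = Finset.map ⟨fun j => j + 1, add_left_injective 1⟩
      (Finset.range (n + 1)) from by
    ext a
    simp only [Finset.mem_Icc, Finset.mem_map, Finset.mem_range, Function.Embedding.coeFn_mk]
    constructor
    · rintro ⟨h1, h2⟩; exact ⟨a - 1, by omega, by omega⟩
    · rintro ⟨b, hb, rfl⟩; omega]
  rw [Finset.sum_map]
  refine Finset.sum_congr rfl fun j _ => ?_
  simp only [Function.Embedding.coeFn_mk, Nat.add_sub_cancel]
  rw [T_eq, show j + 1 = j + 1 from rfl, key n j, coeff_derivative]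
  ring
end

section
/- For every nonnegative integer n and real x with cos x ≠ 0, the n-th derivative of tan at x equals T(n,1) + Σ_{k=1}^{n+1} (1/k) T(n+1,k) tan^k(x). -/
/-!
Since `tan' = 1 + tan²`, the chain rule shows that `tan⁽ⁿ⁾ = Pₙ ∘ tan` for the polynomials
`P₀ = y`, `Pₙ₊₁ = Pₙ' · (1 + y²)`, and it gives the recurrence
`T(n+1, m+1) = (m+1) (T(n, m) + T(n, m+2))`, which also shows `T(n, k) = 0` for `k > n`.
The recurrence turns the coefficient `T(n+1, k) / k` into `T(n, k-1) + T(n, k+1)`, and with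
this the claimed right-hand side satisfies the recursion of `Pₙ` after a shift of indices.
-/

open Real Finset Topology

theorem Real.hasDerivAt_tan_one_add_sq {x : ℝ} (hx : cos x ≠ 0) :
    HasDerivAt tan (1 + tan x ^ 2) x := by
  simpa [one_div, ← inv_one_add_tan_sq hx] using hasDerivAt_tan hx

theorem HasDerivAt.comp_tan {p : ℝ → ℝ} {p' x : ℝ} (hp : HasDerivAt p p' (tan x))
    (hx : Real.cos x ≠ 0) : HasDerivAt (fun t => p (tan t)) (p' * (1 + tan x ^ 2)) x :=
  hp.comp x (hasDerivAt_tan_one_add_sq hx)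

theorem hasDerivAt_tan_pow_succ (m : ℕ) {x : ℝ} (hx : cos x ≠ 0) :
    HasDerivAt (fun t => tan t ^ (m + 1)) ((m + 1) * (tan x ^ m + tan x ^ (m + 2))) x := by
  convert HasDerivAt.comp_tan (hasDerivAt_pow (m + 1) (tan x)) hx using 1
  push_cast
  ring

theorem T_zero_zero : T 0 0 = 1 := by
  simp [T]

theorem T_zero_succ (k : ℕ) : T 0 (k + 1) = 0 := by
  simp [T]

theorem T_succ_zero (n : ℕ) : T (n + 1) 0 = 0 := by
  simp [T, iteratedDeriv_const]

theorem T_succ_succ (n m : ℕ) : T (n + 1) (m + 1) = (m + 1) * (T n m + T n (m + 2)) := by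
  have h0 : cos 0 ≠ 0 := by simp
  have hderiv : deriv (fun t => tan t ^ (m + 1)) =ᶠ[𝓝 0]
      fun t => (m + 1) * (tan t ^ m + tan t ^ (m + 2)) := by
    filter_upwards [continuous_cos.continuousAt.eventually_ne h0] with y hy
    exact (hasDerivAt_tan_pow_succ m hy).deriv
  have hsmooth (k : ℕ) : ContDiffAt ℝ n (fun t => tan t ^ k) 0 :=
    (contDiffAt_tan.mpr h0).pow k
  rw [T, iteratedDeriv_succ', hderiv.iteratedDeriv_eq, iteratedDeriv_const_mul_field,
    iteratedDeriv_fun_add (hsmooth m) (hsmooth (m + 2))]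
  rfl

theorem T_eq_zero_of_lt {n k : ℕ} (h : n < k) : T n k = 0 := by
  induction n generalizing k with
  | zero =>
    obtain ⟨k, rfl⟩ := Nat.exists_eq_add_of_lt h
    exact T_zero_succ _
  | succ n ih =>
    obtain ⟨m, rfl⟩ := Nat.exists_eq_add_of_lt h
    rw [T_succ_succ, ih (by omega), ih (by omega)]
    ring

/-- The polynomial `Pₙ`, written as the right-hand side of `deriv_tan_closed` with `k` shifted to
`k + 1`. -/
noncomputable def tanDerivPoly (n : ℕ) (y : ℝ) : ℝ :=
  T n 1 + ∑ k ∈ range (n + 1), T (n + 1) (k + 1) / (k + 1) * y ^ (k + 1)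

theorem tanDerivPoly_zero (y : ℝ) : tanDerivPoly 0 y = y := by
  simp [tanDerivPoly, T_zero_succ, T_succ_succ, T_zero_zero]

theorem hasDerivAt_tanDerivPoly (n : ℕ) (y : ℝ) :
    HasDerivAt (tanDerivPoly n) (∑ k ∈ range (n + 1), T (n + 1) (k + 1) * y ^ k) y := by
  refine HasDerivAt.const_add _ (HasDerivAt.fun_sum fun k _ => ?_)
  refine ((hasDerivAt_pow (k + 1) y).const_mul (T (n + 1) (k + 1) / (k + 1))).congr_deriv ?_
  push_cast
  field_simp

theorem tanDerivPoly_succ (n : ℕ) (y : ℝ) :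
    tanDerivPoly (n + 1) y = (∑ k ∈ range (n + 1), T (n + 1) (k + 1) * y ^ k) * (1 + y ^ 2) := by
  have hcoeff (k : ℕ) : T (n + 2) (k + 1) / (k + 1) = T (n + 1) k + T (n + 1) (k + 2) := by
    rw [T_succ_succ]
    field_simp
  have hlow : ∑ k ∈ range (n + 2), T (n + 1) k * y ^ (k + 1)
      = ∑ k ∈ range (n + 1), T (n + 1) (k + 1) * y ^ (k + 2) := by
    simp [sum_range_succ' _ (n + 1), T_succ_zero]
  have hhigh : T (n + 1) 1 + ∑ k ∈ range (n + 2), T (n + 1) (k + 2) * y ^ (k + 1)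
      = ∑ k ∈ range (n + 1), T (n + 1) (k + 1) * y ^ k := by
    rw [sum_range_succ _ (n + 1), sum_range_succ _ n, sum_range_succ' _ n,
      T_eq_zero_of_lt (by omega : n + 1 < n + 2), T_eq_zero_of_lt (by omega : n + 1 < n + 1 + 2)]
    simp only [zero_mul, add_zero, zero_add, pow_zero, mul_one]
    exact add_comm _ _
  calc tanDerivPoly (n + 1) y
      = T (n + 1) 1 + (∑ k ∈ range (n + 2), T (n + 1) k * y ^ (k + 1)
          + ∑ k ∈ range (n + 2), T (n + 1) (k + 2) * y ^ (k + 1)) := by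
        simp only [tanDerivPoly, hcoeff, add_mul, sum_add_distrib]
    _ = ∑ k ∈ range (n + 1), T (n + 1) (k + 1) * y ^ k
          + ∑ k ∈ range (n + 1), T (n + 1) (k + 1) * y ^ (k + 2) := by
        rw [hlow, ← hhigh]; ring
    _ = _ := by
        rw [mul_add, mul_one, sum_mul]
        congr 1
        exact sum_congr rfl fun k _ => by ring

theorem iteratedDeriv_tan_eq_tanDerivPoly (n : ℕ) {x : ℝ} (hx : cos x ≠ 0) :
    iteratedDeriv n tan x = tanDerivPoly n (tan x) := by
  induction n generalizing x with
  | zero => simp [tanDerivPoly_zero]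
  | succ n ih =>
    have hnear : iteratedDeriv n tan =ᶠ[𝓝 x] fun t => tanDerivPoly n (tan t) := by
      filter_upwards [continuous_cos.continuousAt.eventually_ne hx] with y hy
      exact ih hy
    rw [iteratedDeriv_succ, hnear.deriv_eq,
      (HasDerivAt.comp_tan (hasDerivAt_tanDerivPoly n (tan x)) hx).deriv, tanDerivPoly_succ]

theorem sum_Icc_one_eq_sum_range {M : Type*} [AddCommMonoid M] (f : ℕ → M) (n : ℕ) :
    ∑ k ∈ Icc 1 n, f k = ∑ k ∈ range n, f (k + 1) := by
  rw [← Ico_add_one_right_eq_Icc, sum_Ico_eq_sum_range]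
  simp [add_comm]

theorem deriv_tan_closed (n : ℕ) (x : ℝ) (hx : Real.cos x ≠ 0) :
    iteratedDeriv n Real.tan x
      = T n 1 + ∑ k ∈ Finset.Icc 1 (n + 1),
          (1 / (k : ℝ)) * T (n + 1) k * Real.tan x ^ k := by
  rw [iteratedDeriv_tan_eq_tanDerivPoly n hx, tanDerivPoly, sum_Icc_one_eq_sum_range]
  push_cast
  simp only [one_div_mul_eq_div]
end
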